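/- Let α = (α_i)_{i≥0} and β = (β_i)_{i≥0} be the integer sequences with α_i = 2^i + 1 and β_i = 2 - i. Then for every positive integer n, det(P_{α,β}(n)) = F(2n+1), where F denotes the Fibonacci sequence with F(0) = 0, F(1) = 1. -/

import Mathlib

open Matrix

/-- Entry `P_{i,j}` of the generalized Pascal triangle associated to sequences `α`, `β`:
`P_{i,0} = α i`, `P_{0,j} = β j`, and `P_{i,j} = P_{i-1,j} + P_{i,j-1}` for `i, j ≥ 1`. -/
def pascalEntry {R : Type*} [CommRing R] (α β : ℕ → R) : ℕ → ℕ → R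
  | i, 0 => α i
  | 0, j + 1 => β (j + 1)
  | i + 1, j + 1 => pascalEntry α β i (j + 1) + pascalEntry α β (i + 1) j

/-- The generalized Pascal triangle `P_{α,β}(n)`. -/
def genPascal {R : Type*} [CommRing R] (α β : ℕ → R) (n : ℕ) :
    Matrix (Fin n) (Fin n) R :=
  Matrix.of fun i j => pascalEntry α β (i : ℕ) (j : ℕ)

/-- The Töplitz matrix `T_{α,β}(n)`: `t_{i,j} = α_{i-j}` if `i ≥ j`, else `β_{j-i}`. -/
def toeplitz {R : Type*} [CommRing R] (α β : ℕ → R) (n : ℕ) :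
    Matrix (Fin n) (Fin n) R :=
  Matrix.of fun i j => if (j : ℕ) ≤ (i : ℕ) then α ((i : ℕ) - (j : ℕ)) else β ((j : ℕ) - (i : ℕ))

/-- The unipotent lower triangular matrix `L(n)` with `L_{i,j} = C(i,j)` for `i ≥ j`. -/
def lowerL (R : Type*) [CommRing R] (n : ℕ) : Matrix (Fin n) (Fin n) R :=
  Matrix.of fun i j => if (j : ℕ) ≤ (i : ℕ) then ((i : ℕ).choose (j : ℕ) : R) else 0

/-- The binomial inverse transform `α̂_i = ∑_{k=0}^{i} (-1)^{i+k} C(i,k) α_k`. -/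
def hatSeq {R : Type*} [CommRing R] (α : ℕ → R) (i : ℕ) : R :=
  ∑ k ∈ Finset.range (i + 1), (-1 : R) ^ (i + k) * (i.choose k : R) * α k

/-- The binomial transform `α̌_i = ∑_{k=0}^{i} C(i,k) α_k`. -/
def checkSeq {R : Type*} [CommRing R] (α : ℕ → R) (i : ℕ) : R :=
  ∑ k ∈ Finset.range (i + 1), (i.choose k : R) * α k

/-!
Let `L` be the binomial matrix and `t_{k,l}` the entries of a Toeplitz matrix `T_{a,b}`. The
entries `∑_{k,l} C(i,k) C(j,l) t_{k,l}` of `L T Lᵀ` satisfy Pascal's recurrence because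
`t_{k+1,l+1} = t_{k,l}`, and its first column and row are the binomial transforms `ǎ`, `b̌`.
Hence `P_{ǎ,b̌}(n) = L T Lᵀ`, and `det P_{ǎ,b̌}(n) = det T_{a,b}(n)` since `L` is unitriangular.

For `α_i = 2^i + 1` and `β_i = 2 - i` we have `α̂ = (2, 1, 1, …)` and `β̂ = (2, -1, 0, 0, …)`.
The first row of `T = T_{α̂,β̂}` has only two nonzero entries; expanding along it couples `det T`
with `det V`, where `V` is `T` with its first column replaced by ones:
`det T(m+2) = 2 det T(m+1) + det V(m+1)` and `det V(m+2) = det T(m+1) + det V(m+1)`.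
This is the Fibonacci recurrence on odd and even indices, so `det T(n) = F(2n+1)`.
-/

open Finset

section

variable {R : Type*}

def toeplitzEntry (a b : ℕ → R) (k l : ℕ) : R :=
  if l ≤ k then a (k - l) else b (l - k)

theorem toeplitzEntry_succ_succ (a b : ℕ → R) (k l : ℕ) :
    toeplitzEntry a b (k + 1) (l + 1) = toeplitzEntry a b k l := by
  simp only [toeplitzEntry, Nat.add_le_add_iff_right, Nat.add_sub_add_right]

variable [CommRing R]

theorem pascalEntry_eq_of_rec (α β : ℕ → R) (P : ℕ → ℕ → R) (hcol : ∀ i, P i 0 = α i)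
    (hrow : ∀ j, P 0 (j + 1) = β (j + 1))
    (hrec : ∀ i j, P (i + 1) (j + 1) = P i (j + 1) + P (i + 1) j) :
    pascalEntry α β = P := by
  funext i j
  induction i, j using pascalEntry.induct with
  | case1 i => rw [pascalEntry, hcol]
  | case2 j => rw [pascalEntry, hrow]
  | case3 i j ih₁ ih₂ => rw [pascalEntry, ih₁, ih₂, hrec]

theorem checkSeq_zero (a : ℕ → R) : checkSeq a 0 = a 0 := by
  simp [checkSeq]

theorem checkSeq_add (a b : ℕ → R) : checkSeq (a + b) = checkSeq a + checkSeq b := by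
  funext i
  simp [checkSeq, mul_add, sum_add_distrib]

theorem checkSeq_eq_sum_range_add (a : ℕ → R) (i : ℕ) :
    checkSeq a i = ∑ k ∈ range i, (i.choose (k + 1) : R) * a (k + 1) + a 0 := by
  rw [checkSeq, sum_range_succ', Nat.choose_zero_right, Nat.cast_one, one_mul]

theorem checkSeq_succ (a : ℕ → R) (i : ℕ) :
    checkSeq a (i + 1) = checkSeq a i + checkSeq (fun k => a (k + 1)) i := by
  rw [checkSeq_eq_sum_range_add a (i + 1), checkSeq_eq_sum_range_add a i, checkSeq]
  simp only [Nat.choose_succ_succ', Nat.cast_add, add_mul, sum_add_distrib]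
  rw [sum_range_succ (fun k => (i.choose (k + 1) : R) * a (k + 1)), Nat.choose_succ_self,
    Nat.cast_zero, zero_mul, add_zero]
  ring

def checkSeq₂ (f : ℕ → ℕ → R) (i j : ℕ) : R :=
  checkSeq (fun l => checkSeq (fun k => f k l) i) j

theorem checkSeq₂_zero_left (f : ℕ → ℕ → R) (j : ℕ) : checkSeq₂ f 0 j = checkSeq (f 0) j := by
  simp only [checkSeq₂, checkSeq_zero]

theorem checkSeq₂_zero_right (f : ℕ → ℕ → R) (i : ℕ) :
    checkSeq₂ f i 0 = checkSeq (fun k => f k 0) i :=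
  checkSeq_zero _

theorem checkSeq₂_succ_succ {f : ℕ → ℕ → R} (hf : ∀ k l, f (k + 1) (l + 1) = f k l) (i j : ℕ) :
    checkSeq₂ f (i + 1) (j + 1) = checkSeq₂ f i (j + 1) + checkSeq₂ f (i + 1) j := by
  have hshift : (fun l => checkSeq (fun k => f k (l + 1)) (i + 1)) =
      (fun l => checkSeq (fun k => f k (l + 1)) i) + fun l => checkSeq (fun k => f k l) i := by
    funext l
    simp only [checkSeq_succ _ i, hf, Pi.add_apply]
  rw [checkSeq₂, checkSeq_succ, hshift, checkSeq_add, checkSeq₂, checkSeq₂, checkSeq_succ _ j,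
    Pi.add_apply]
  ring

theorem pascalEntry_checkSeq (a b : ℕ → R) (h₀ : a 0 = b 0) :
    pascalEntry (checkSeq a) (checkSeq b) = checkSeq₂ (toeplitzEntry a b) := by
  refine pascalEntry_eq_of_rec _ _ _ (fun i => ?_) (fun j => ?_)
    (checkSeq₂_succ_succ (toeplitzEntry_succ_succ a b))
  · simp [checkSeq₂_zero_right, toeplitzEntry]
  · rw [checkSeq₂_zero_left]
    congr 1
    funext l
    rcases l with _ | l <;> simp [toeplitzEntry, h₀]

theorem lowerL_apply (n : ℕ) (i j : Fin n) : lowerL R n i j = ((i : ℕ).choose j : R) := by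
  rw [lowerL, of_apply]
  split_ifs with h
  · rfl
  · rw [Nat.choose_eq_zero_of_lt (not_le.mp h), Nat.cast_zero]

theorem sum_fin_choose_mul {n i : ℕ} (hi : i < n) (a : ℕ → R) :
    ∑ k : Fin n, (i.choose k : R) * a k = checkSeq a i := by
  rw [Fin.sum_univ_eq_sum_range (fun k => (i.choose k : R) * a k), checkSeq]
  refine (sum_subset (range_subset_range.2 hi) fun k _ hk => ?_).symm
  rw [Nat.choose_eq_zero_of_lt (by simpa using hk), Nat.cast_zero, zero_mul]

theorem lowerL_mul_mul_transpose_apply {n : ℕ} (f : ℕ → ℕ → R) (i j : Fin n) :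
    (lowerL R n * Matrix.of (fun k l : Fin n => f k l) * (lowerL R n)ᵀ) i j =
      checkSeq₂ f i j := by
  simp only [mul_apply, of_apply, transpose_apply, lowerL_apply]
  rw [checkSeq₂, ← sum_fin_choose_mul j.isLt]
  refine sum_congr rfl fun l _ => ?_
  rw [sum_fin_choose_mul i.isLt (fun k => f k l), mul_comm]

theorem genPascal_checkSeq (a b : ℕ → R) (h₀ : a 0 = b 0) (n : ℕ) :
    genPascal (checkSeq a) (checkSeq b) n = lowerL R n * toeplitz a b n * (lowerL R n)ᵀ := by
  have htoeplitz : toeplitz a b n = of fun k l : Fin n => toeplitzEntry a b k l := rfl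
  ext i j
  rw [htoeplitz, lowerL_mul_mul_transpose_apply, genPascal, of_apply,
    pascalEntry_checkSeq a b h₀]

theorem det_lowerL (n : ℕ) : (lowerL R n).det = 1 := by
  rw [det_of_isLowerTriangular _ fun i j h => ?_]
  · simp [lowerL_apply]
  · have hij : (i : ℕ) < j := OrderDual.toDual_lt_toDual.mp h
    rw [lowerL_apply, Nat.choose_eq_zero_of_lt hij, Nat.cast_zero]

theorem det_genPascal_checkSeq (a b : ℕ → R) (h₀ : a 0 = b 0) (n : ℕ) :
    (genPascal (checkSeq a) (checkSeq b) n).det = (toeplitz a b n).det := by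
  rw [genPascal_checkSeq a b h₀, det_mul, det_mul, det_transpose, det_lowerL, one_mul, mul_one]

theorem det_eq_of_row_zero_eq_zero {m : ℕ} (M : Matrix (Fin (m + 2)) (Fin (m + 2)) R)
    (hrow : ∀ j : Fin m, M 0 j.succ.succ = 0) :
    M.det = M 0 0 * (M.submatrix Fin.succ (0 : Fin (m + 2)).succAbove).det
      - M 0 1 * (M.submatrix Fin.succ (1 : Fin (m + 2)).succAbove).det := by
  simp only [det_succ_row_zero M, Fin.sum_univ_succ, hrow]
  simp [sub_eq_add_neg]

theorem toeplitz_submatrix_succ_succ (a b : ℕ → R) (n : ℕ) :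
    (toeplitz a b (n + 1)).submatrix Fin.succ Fin.succ = toeplitz a b n := by
  ext i j
  simp [toeplitz]

theorem toeplitz_submatrix_succ_succAbove_one (a b : ℕ → R) (m : ℕ) :
    (toeplitz a b (m + 2)).submatrix Fin.succ (1 : Fin (m + 2)).succAbove =
      (toeplitz a b (m + 1)).updateCol 0 fun i => a (i + 1) := by
  ext i j
  cases j using Fin.cases <;> simp [toeplitz, Fin.succAbove]

theorem updateCol_zero_submatrix_succAbove_one {α ι κ : Type*} {m : ℕ}
    (M : Matrix ι (Fin (m + 2)) α) (c : ι → α) (f : κ → ι) :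
    (M.updateCol 0 c).submatrix f (1 : Fin (m + 2)).succAbove =
      (M.submatrix f (1 : Fin (m + 2)).succAbove).updateCol 0 (c ∘ f) := by
  ext i j
  cases j using Fin.cases <;> simp [Fin.succAbove]

end

def alphaHat (i : ℕ) : ℤ := if i = 0 then 2 else 1

def betaHat (j : ℕ) : ℤ := if j = 0 then 2 else if j = 1 then -1 else 0

theorem checkSeq_alphaHat : checkSeq alphaHat = fun i => 2 ^ i + 1 := by
  funext i
  have hsum : ∑ k ∈ range i, (i.choose (k + 1) : ℤ) + 1 = 2 ^ i := by
    have := (sum_range_succ' (fun k => i.choose k) i).symm.trans (Nat.sum_range_choose i)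
    rw [Nat.choose_zero_right] at this
    exact_mod_cast this
  simp [checkSeq_eq_sum_range_add, alphaHat, ← hsum]
  ring

theorem checkSeq_betaHat : checkSeq betaHat = fun j : ℕ => 2 - (j : ℤ) := by
  funext j
  rcases j with _ | j <;> simp [checkSeq_eq_sum_range_add, betaHat]
  ring

def hatToeplitzOnes (m : ℕ) : Matrix (Fin (m + 1)) (Fin (m + 1)) ℤ :=
  (toeplitz alphaHat betaHat (m + 1)).updateCol 0 1

theorem toeplitz_hat_submatrix_succ_succAbove_one (m : ℕ) :
    (toeplitz alphaHat betaHat (m + 2)).submatrix Fin.succ (1 : Fin (m + 2)).succAbove =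
      hatToeplitzOnes m := by
  rw [toeplitz_submatrix_succ_succAbove_one, hatToeplitzOnes]
  rfl

theorem hatToeplitzOnes_submatrix_succ_succAbove_one (m : ℕ) :
    (hatToeplitzOnes (m + 1)).submatrix Fin.succ (1 : Fin (m + 2)).succAbove =
      hatToeplitzOnes m := by
  refine (updateCol_zero_submatrix_succAbove_one (toeplitz alphaHat betaHat (m + 2)) 1 _).trans ?_
  rw [toeplitz_hat_submatrix_succ_succAbove_one, hatToeplitzOnes, updateCol_idem]
  rfl

theorem det_toeplitz_hat_succ_succ (m : ℕ) :
    (toeplitz alphaHat betaHat (m + 2)).det =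
      2 * (toeplitz alphaHat betaHat (m + 1)).det + (hatToeplitzOnes m).det := by
  rw [det_eq_of_row_zero_eq_zero _ fun j => by simp [toeplitz, betaHat],
    Fin.succAbove_zero, toeplitz_submatrix_succ_succ, toeplitz_hat_submatrix_succ_succAbove_one]
  simp [toeplitz, alphaHat, betaHat]

theorem det_hatToeplitzOnes_succ (m : ℕ) :
    (hatToeplitzOnes (m + 1)).det =
      (toeplitz alphaHat betaHat (m + 1)).det + (hatToeplitzOnes m).det := by
  rw [det_eq_of_row_zero_eq_zero _ fun j => by simp [hatToeplitzOnes, toeplitz, betaHat],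
    hatToeplitzOnes_submatrix_succ_succAbove_one, hatToeplitzOnes, submatrix_updateCol_succAbove,
    Fin.succAbove_zero, toeplitz_submatrix_succ_succ]
  simp [toeplitz, betaHat]

theorem det_toeplitz_hat_and_hatToeplitzOnes (m : ℕ) :
    (toeplitz alphaHat betaHat (m + 1)).det = Nat.fib (2 * m + 3) ∧
      (hatToeplitzOnes m).det = Nat.fib (2 * m + 2) := by
  induction m with
  | zero => constructor <;> rfl
  | succ m ih =>
    rw [det_toeplitz_hat_succ_succ, det_hatToeplitzOnes_succ, ih.1, ih.2]
    constructor <;> push_cast [show 2 * (m + 1) = 2 * m + 2 by ring, Nat.fib_add_two] <;> ring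

theorem det_toeplitz_hat (n : ℕ) : (toeplitz alphaHat betaHat n).det = Nat.fib (2 * n + 1) := by
  cases n with
  | zero => simp
  | succ m => exact (det_toeplitz_hat_and_hatToeplitzOnes m).1

theorem det_genPascal_fib_odd_general (n : ℕ) :
    (genPascal (fun i => (2 : ℤ) ^ i + 1) (fun i => 2 - (i : ℤ)) n).det =
      (Nat.fib (2 * n + 1) : ℤ) := by
  rw [← checkSeq_alphaHat, ← checkSeq_betaHat, det_genPascal_checkSeq alphaHat betaHat rfl,
    det_toeplitz_hat]

/-- for `α_i = 2^i + 1` and `β_i = 2 - i`, `det(P_{α,β}(n)) = F(2n+1)`. -/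
theorem det_genPascal_fib_odd (n : ℕ) (hn : 0 < n) :
    (genPascal (fun i => (2 : ℤ) ^ i + 1) (fun i => 2 - (i : ℤ)) n).det =
      (Nat.fib (2 * n + 1) : ℤ) :=
  det_genPascal_fib_odd_general n
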